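/- arXiv:1201.2363 — 3 statements merged into one kernel-verified Lean document; each statement's English description precedes it below -/
import Mathlib

section
/- Let m and n be positive odd integers. The number of group homomorphisms from the dihedral group D_m into D_n is 1 + n·(∑_{k | gcd(m,n)} φ(k)), where φ is Euler's totient function. -/
/-!
For odd `m`, a homomorphism `φ : D_m → D_n` sends every rotation to an element of odd order,
hence to a rotation, so `φ ∘ r = r ∘ g` for an additive map `g : ℤ/m → ℤ/n`. If `φ (sr 0)` is a
reflection `sr j`, then `φ` is determined by `(g, j)`, and every such pair occurs. If it is a
rotation, then `φ` sends every reflection to a rotation of order dividing `2` and `n`, i.e. to `1`,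
so `φ = 1`. Hence the homomorphisms are counted by `1 + n · #Hom(ℤ/m, ℤ/n) = 1 + n · gcd(m, n)`.
-/

theorem ZMod.card_addMonoidHom (m n : ℕ) [NeZero n] :
    Nat.card (ZMod m →+ ZMod n) = m.gcd n := by
  have e : (ZMod m →+ ZMod n) ≃ (nsmulAddMonoidHom m : ZMod n →+ ZMod n).ker :=
    (ZMod.lift m).symm.trans <| (zmultiplesHom (ZMod n)).symm.subtypeEquiv fun f => by
      simp [-nsmul_eq_mul, ← map_nsmul]
  rw [Nat.card_congr e, IsAddCyclic.card_nsmulAddMonoidHom_ker, Nat.card_zmod, Nat.gcd_comm]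

namespace DihedralGroup

variable {m n : ℕ}

theorem r_pow_self (i : ZMod n) : r i ^ n = 1 := by
  rw [r_pow, ZMod.natCast_self, mul_zero, r_zero]

theorem exists_r_of_pow_eq_one (hm : Odd m) {x : DihedralGroup n} (hx : x ^ m = 1) :
    ∃ i, x = r i := by
  rcases x with i | i
  · exact ⟨i, rfl⟩
  · have : sr i = 1 :=
      (pow_eq_one_iff_of_coprime (Nat.coprime_two_left.mpr hm)).mp ⟨by rw [sq, sr_mul_self], hx⟩
    exact absurd this (by simp [one_def, -r_zero])

theorem r_eq_one_of_sq_eq_one (hn : Odd n) {i : ZMod n} (h : r i ^ 2 = 1) : r i = 1 :=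
  (pow_eq_one_iff_of_coprime (Nat.coprime_two_left.mpr hn)).mp ⟨h, r_pow_self i⟩

def homOfAddMonoidHom (g : ZMod m →+ ZMod n) (j : ZMod n) : DihedralGroup m →* DihedralGroup n where
  toFun
    | r k => r (g k)
    | sr k => sr (j + g k)
  map_one' := by simp [one_def, -r_zero]
  map_mul' := by
    rintro (a | a) (b | b) <;>
      simp only [r_mul_r, r_mul_sr, sr_mul_r, sr_mul_sr, map_add, map_sub] <;> congr 1 <;> abel

@[simp]
theorem homOfAddMonoidHom_r (g : ZMod m →+ ZMod n) (j : ZMod n) (k : ZMod m) :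
    homOfAddMonoidHom g j (r k) = r (g k) := rfl

@[simp]
theorem homOfAddMonoidHom_sr (g : ZMod m →+ ZMod n) (j : ZMod n) (k : ZMod m) :
    homOfAddMonoidHom g j (sr k) = sr (j + g k) := rfl

theorem homOfAddMonoidHom_ne_one (g : ZMod m →+ ZMod n) (j : ZMod n) :
    homOfAddMonoidHom g j ≠ 1 := fun h => by
  simpa [one_def, -r_zero] using DFunLike.congr_fun h (sr 0)

theorem homOfAddMonoidHom_injective :
    Function.Injective fun p : (ZMod m →+ ZMod n) × ZMod n => homOfAddMonoidHom p.1 p.2 := by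
  rintro ⟨g, j⟩ ⟨g', j'⟩ h
  have hj : j = j' := by simpa using DFunLike.congr_fun h (sr 0)
  have hg : g = g' := AddMonoidHom.ext fun k => by simpa using DFunLike.congr_fun h (r k)
  rw [hj, hg]

theorem exists_addMonoidHom_map_r (hm : Odd m) (φ : DihedralGroup m →* DihedralGroup n) :
    ∃ g : ZMod m →+ ZMod n, ∀ k, φ (r k) = r (g k) := by
  choose g hg using fun k =>
    exists_r_of_pow_eq_one hm (x := φ (r k)) (by rw [← map_pow, r_pow_self, map_one])
  refine ⟨AddMonoidHom.mk' g fun a b => r.inj ?_, hg⟩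
  rw [← r_mul_r, ← hg, ← hg, ← hg, ← map_mul, r_mul_r]

theorem eq_one_or_exists_eq_homOfAddMonoidHom (hm : Odd m) (hn : Odd n)
    (φ : DihedralGroup m →* DihedralGroup n) :
    φ = 1 ∨ ∃ g j, φ = homOfAddMonoidHom g j := by
  obtain ⟨g, hg⟩ := exists_addMonoidHom_map_r hm φ
  have map_sr (k : ZMod m) : φ (sr k) = φ (sr 0) * r (g k) := by
    rw [← hg, ← map_mul, sr_mul_r, zero_add]
  rcases h0 : φ (sr 0) with t | j
  · left
    have map_sr_eq_one (k : ZMod m) : φ (sr k) = 1 := by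
      have hsq : φ (sr k) ^ 2 = 1 := by rw [← map_pow, sq, sr_mul_self, map_one]
      rw [map_sr, h0, r_mul_r] at hsq ⊢
      exact r_eq_one_of_sq_eq_one hn hsq
    refine MonoidHom.ext fun x => ?_
    rcases x with k | k
    · rw [MonoidHom.one_apply, show r k = sr 0 * sr k by rw [sr_mul_sr, sub_zero], map_mul,
        map_sr_eq_one, map_sr_eq_one, mul_one]
    · exact map_sr_eq_one k
  · right
    refine ⟨g, j, MonoidHom.ext ?_⟩
    rintro (k | k)
    · rw [hg, homOfAddMonoidHom_r]
    · rw [map_sr, h0, sr_mul_r, homOfAddMonoidHom_sr]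

noncomputable def optionEquivMonoidHom (hm : Odd m) (hn : Odd n) :
    Option ((ZMod m →+ ZMod n) × ZMod n) ≃ (DihedralGroup m →* DihedralGroup n) :=
  Equiv.ofBijective (fun o => o.elim 1 fun p => homOfAddMonoidHom p.1 p.2) <| by
    refine ⟨?_, fun φ => ?_⟩
    · rintro (_ | ⟨g, j⟩) (_ | ⟨g', j'⟩) h
      · rfl
      · exact absurd h.symm (homOfAddMonoidHom_ne_one g' j')
      · exact absurd h (homOfAddMonoidHom_ne_one g j)
      · exact congrArg some (homOfAddMonoidHom_injective h)
    · rcases eq_one_or_exists_eq_homOfAddMonoidHom hm hn φ with rfl | ⟨g, j, rfl⟩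
      · exact ⟨none, rfl⟩
      · exact ⟨some (g, j), rfl⟩

end DihedralGroup

theorem numHom_odd_odd_general (m n : ℕ) (hmo : Odd m) (hno : Odd n) :
    Nat.card (DihedralGroup m →* DihedralGroup n) =
      1 + n * ∑ k ∈ (Nat.gcd m n).divisors, Nat.totient k := by
  have : NeZero n := ⟨hno.pos.ne'⟩
  have : Finite (ZMod m →+ ZMod n) := Nat.finite_of_card_ne_zero <| by
    rw [ZMod.card_addMonoidHom]; exact (Nat.gcd_pos_of_pos_right m hno.pos).ne'
  rw [← Nat.card_congr (DihedralGroup.optionEquivMonoidHom hmo hno), Finite.card_option,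
    Nat.card_prod, ZMod.card_addMonoidHom, Nat.card_zmod, Nat.sum_totient]
  ring

theorem numHom_odd_odd (m n : ℕ) (hm : 0 < m) (hn : 0 < n) (hmo : Odd m) (hno : Odd n) :
    Nat.card (DihedralGroup m →* DihedralGroup n) =
      1 + n * ∑ k ∈ (Nat.gcd m n).divisors, Nat.totient k :=
  numHom_odd_odd_general m n hmo hno
end

section
/- Let m be a positive odd integer and n a positive even integer. The number of group homomorphisms from D_m into D_n is 2 + n·(∑_{k | gcd(m,n)} φ(k)). -/
/-!
A homomorphism `D_m → G` is the same as a pair `(x, y)` with `x ^ m = 1`, `y * y = 1` and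
`y * x * y = x⁻¹`, namely the images of `r 1` and `sr 0`. In `D_n` with `m` odd, reflections have
`sr i ^ m = sr i ≠ 1`, so `x = r i` with `m • i = 0`, and there are `gcd n m` such `i`. All `n`
reflections invert `r i`, while a rotation `r j` is an involution inverting `r i` iff `2 • j = 0`
and `2 • i = 0`; for odd `m` the latter forces `i = 0`. This gives `n * gcd n m + gcd n 2`
homomorphisms, and `∑_{k ∣ g} φ k = g`.
-/

open Finset

lemma pow_zmod_val_add {M : Type*} [Monoid M] {m : ℕ} [NeZero m] {x : M} (hx : x ^ m = 1)
    (i j : ZMod m) : x ^ (i + j).val = x ^ i.val * x ^ j.val := by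
  rw [ZMod.val_add, ← pow_eq_pow_mod _ hx, pow_add]

lemma ZMod.card_filter_nsmul_eq_zero (n d : ℕ) [NeZero n] :
    #{i : ZMod n | d • i = 0} = n.gcd d := by
  have := IsAddCyclic.card_nsmulAddMonoidHom_ker (ZMod n) d
  rw [Nat.card_zmod] at this
  rw [← this, ← Fintype.card_subtype, ← Nat.card_eq_fintype_card]
  rfl

@[to_additive]
lemma pow_eq_self_of_mul_self_eq_one {M : Type*} [Monoid M] {a : M} (ha : a * a = 1) {k : ℕ}
    (hk : Odd k) : a ^ k = a := by
  obtain ⟨k, rfl⟩ := hk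
  rw [pow_succ, pow_mul, sq, ha, one_pow, one_mul]

lemma mul_pow_mul_eq_inv_pow {G : Type*} [Group G] {x y : G} (hy : y * y = 1)
    (hc : y * x * y = x⁻¹) (k : ℕ) : y * x ^ k * y = (x ^ k)⁻¹ := by
  have hyinv : y⁻¹ = y := inv_eq_of_mul_eq_one_right hy
  have := conj_pow (a := y) (b := x) (i := k)
  rw [hyinv] at this
  rw [← this, hc, inv_pow]

namespace DihedralGroup

section Lift

variable {m : ℕ} {G : Type*} [Group G] {x y : G}

def liftFun (x y : G) : DihedralGroup m → G
  | r i => x ^ i.val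
  | sr i => y * x ^ i.val

variable [NeZero m]

lemma liftFun_mul (hx : x ^ m = 1) (hy : y * y = 1) (hc : y * x * y = x⁻¹)
    (a b : DihedralGroup m) : liftFun x y (a * b) = liftFun x y a * liftFun x y b := by
  have hsub (i j : ZMod m) : x ^ (j - i).val = (x ^ i.val)⁻¹ * x ^ j.val := by
    rw [eq_inv_mul_iff_mul_eq, ← pow_zmod_val_add hx, add_sub_cancel]
  have hconj := mul_pow_mul_eq_inv_pow hy hc
  rcases a with i | i <;> rcases b with j | j <;>
    simp only [liftFun, r_mul_r, r_mul_sr, sr_mul_r, sr_mul_sr]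
  · exact pow_zmod_val_add hx i j
  · rw [hsub, ← hconj]
    simp only [← mul_assoc, hy, one_mul]
  · rw [mul_assoc, pow_zmod_val_add hx]
  · rw [hsub, ← hconj]
    simp only [mul_assoc]

def lift (hx : x ^ m = 1) (hy : y * y = 1) (hc : y * x * y = x⁻¹) : DihedralGroup m →* G :=
  MonoidHom.mk' (liftFun x y) (liftFun_mul hx hy hc)

variable (m G) in
def homEquiv : (DihedralGroup m →* G) ≃
    {p : G × G // p.1 ^ m = 1 ∧ p.2 * p.2 = 1 ∧ p.2 * p.1 * p.2 = p.1⁻¹} where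
  toFun f := ⟨(f (r 1), f (sr 0)), by
    refine ⟨?_, ?_, ?_⟩
    · rw [← map_pow, r_one_pow, ZMod.natCast_self, r_zero, map_one]
    · rw [← map_mul, sr_mul_sr, sub_self, r_zero, map_one]
    · rw [← map_mul, ← map_mul, ← map_inv]
      simp [inv_r]⟩
  invFun p := lift p.2.1 p.2.2.1 p.2.2.2
  left_inv f := by
    ext (i | i)
    · show f (r 1) ^ i.val = f (r i)
      rw [← map_pow, r_one_pow, ZMod.natCast_zmod_val]
    · show f (sr 0) * f (r 1) ^ i.val = f (sr i)
      rw [← map_pow, r_one_pow, ← map_mul, sr_mul_r, zero_add, ZMod.natCast_zmod_val]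
  right_inv := by
    rintro ⟨⟨x, y⟩, hx, -, -⟩
    ext
    · show x ^ (1 : ZMod m).val = x
      rw [ZMod.val_one_eq_one_mod, ← pow_eq_pow_mod _ hx, pow_one]
    · show y * x ^ (0 : ZMod m).val = y
      rw [ZMod.val_zero, pow_zero, mul_one]

end Lift

section Count

variable {n : ℕ}

lemma r_pow_eq_one_iff {i : ZMod n} {k : ℕ} : r i ^ k = 1 ↔ k • i = 0 := by
  rw [r_pow, one_def, r.injEq, nsmul_eq_mul, mul_comm]

variable [NeZero n]

lemma sum_univ {M : Type*} [AddCommMonoid M] (f : DihedralGroup n → M) :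
    ∑ g, f g = ∑ i, f (r i) + ∑ i, f (sr i) :=
  (Fintype.sum_equiv equivSum f (f ∘ equivSum.symm) (by rintro (i | i) <;> rfl)).trans
    (Fintype.sum_sum_type _)

lemma card_filter_inverting_involution (i : ZMod n) :
    #{y : DihedralGroup n | y * y = 1 ∧ y * r i * y = (r i)⁻¹} =
      n + if 2 • i = 0 then n.gcd 2 else 0 := by
  have hr (j : ZMod n) :
      (r j * r j = 1 ∧ r j * r i * r j = (r i)⁻¹) ↔ 2 • i = 0 ∧ 2 • j = 0 := by
    simp only [r_mul_r, inv_r, one_def, r.injEq, two_nsmul]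
    constructor
    · rintro ⟨hj, hij⟩
      exact ⟨by linear_combination hij - hj, hj⟩
    · rintro ⟨hi, hj⟩
      exact ⟨hj, by linear_combination hi + hj⟩
  have hsr (j : ZMod n) : sr j * sr j = 1 ∧ sr j * r i * sr j = (r i)⁻¹ := by
    refine ⟨sr_mul_self j, ?_⟩
    rw [sr_mul_r, sr_mul_sr, inv_r]
    ring_nf
  rw [card_filter, sum_univ, add_comm]
  congr 1
  · simp [hsr]
  · split_ifs with hi
    · simp only [hr, hi, true_and, ← card_filter, ZMod.card_filter_nsmul_eq_zero]
    · simp only [hr, hi, false_and, if_false, sum_const_zero]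

variable {m : ℕ} [NeZero m]

theorem card_monoidHom_of_odd (hm : Odd m) :
    Nat.card (DihedralGroup m →* DihedralGroup n) = n * n.gcd m + n.gcd 2 := by
  have hinner (x : DihedralGroup n) :
      (∑ y, if x ^ m = 1 ∧ y * y = 1 ∧ y * x * y = x⁻¹ then 1 else 0) =
        if x ^ m = 1 then #{y | y * y = 1 ∧ y * x * y = x⁻¹} else 0 := by
    split_ifs with hx <;>
      simp only [hx, true_and, false_and, if_false, sum_const_zero, card_filter]
  have hsr (i : ZMod n) : sr i ^ m ≠ 1 := by
    rw [pow_eq_self_of_mul_self_eq_one (sr_mul_self i) hm]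
    rintro ⟨⟩
  have htwo {i : ZMod n} (hi : m • i = 0) : 2 • i = 0 ↔ i = 0 := by
    refine ⟨fun h => ?_, by rintro rfl; exact nsmul_zero 2⟩
    exact (nsmul_eq_self_of_add_self_eq_zero (by rwa [← two_nsmul]) hm).symm.trans hi
  rw [Nat.card_congr (homEquiv m _), Nat.card_eq_fintype_card, Fintype.card_subtype,
    card_filter, Fintype.sum_prod_type]
  simp only [hinner, sum_univ, hsr, if_false, sum_const_zero, add_zero, r_pow_eq_one_iff,
    card_filter_inverting_involution]
  rw [← sum_filter, sum_add_distrib, sum_const, ZMod.card_filter_nsmul_eq_zero, smul_eq_mul,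
    mul_comm, sum_congr rfl fun i hi => if_congr (htwo (mem_filter.1 hi).2) rfl rfl,
    sum_ite_eq', if_pos (by simp)]

end Count

end DihedralGroup

theorem numHom_odd_even (m n : ℕ) (hm : 0 < m) (hn : 0 < n) (hmo : Odd m) (hne : Even n) :
    Nat.card (DihedralGroup m →* DihedralGroup n) =
      2 + n * ∑ k ∈ (Nat.gcd m n).divisors, Nat.totient k := by
  have : NeZero m := NeZero.of_pos hm
  have : NeZero n := NeZero.of_pos hn
  rw [DihedralGroup.card_monoidHom_of_odd hmo, Nat.sum_totient, Nat.gcd_comm,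
    Nat.gcd_eq_right hne.two_dvd, add_comm]
end

section
/- Let m be a positive odd integer and n a positive even integer with gcd(m,n) = 1. The number of group homomorphisms from D_m into D_n is n + 2. -/
/-!
An odd `m` coprime to `n` is coprime to `|D_n| = 2n`, so every homomorphism `D_m → D_n` kills the
rotations, whose orders divide `m`. Such a homomorphism is then determined by the image of one
reflection, which may be any `x` with `x * x = 1`. In `D_n` with `n = 2k` these are the `n`
reflections and the rotations `r 0` and `r k`.
-/

namespace ZMod

theorem add_self_eq_zero_iff_of_double {k : ℕ} [NeZero k] {i : ZMod (k + k)} :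
    i + i = 0 ↔ i = 0 ∨ i = k := by
  constructor
  · intro h
    have hdvd : k + k ∣ i.val + i.val := by
      rw [← ZMod.natCast_eq_zero_iff, Nat.cast_add, ZMod.natCast_zmod_val, h]
    obtain ⟨c, hc⟩ : k ∣ i.val := by
      obtain ⟨c, hc⟩ := hdvd
      exact ⟨c, by linarith⟩
    have hc2 : c < 2 := by
      have := ZMod.val_lt i
      have hk := NeZero.pos k
      nlinarith
    rw [← ZMod.natCast_zmod_val i, hc]
    interval_cases c <;> simp
  · rintro (rfl | rfl)
    · exact add_zero 0
    · rw [← Nat.cast_add, ZMod.natCast_self]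

theorem card_add_self_eq_zero_of_double (k : ℕ) [NeZero k] :
    Nat.card {i : ZMod (k + k) // i + i = 0} = 2 := by
  have hk : (0 : ZMod (k + k)) ≠ k := by
    rw [ne_comm, Ne, ZMod.natCast_eq_zero_iff]
    intro h
    have := Nat.le_of_dvd (NeZero.pos k) h
    have := NeZero.pos k
    omega
  have hset : {i : ZMod (k + k) | i + i = 0}.toFinset = {0, (k : ZMod (k + k))} := by
    ext i
    simp [add_self_eq_zero_iff_of_double]
  rw [Nat.card_eq_fintype_card, Fintype.card_subtype, ← Set.toFinset_ofPred, hset,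
    Finset.card_pair hk]

end ZMod

namespace DihedralGroup

variable {m n : ℕ} {G : Type*} [Group G]

def homOfMulSelfEqOne (x : G) (hx : x * x = 1) : DihedralGroup m →* G where
  toFun
    | r _ => 1
    | sr _ => x
  map_one' := rfl
  map_mul' := by rintro (a | a) (b | b) <;> simp [hx]

theorem map_r_eq_one_of_coprime (f : DihedralGroup m →* G) (h : m.Coprime (Nat.card G))
    (i : ZMod m) : f (r i) = 1 := by
  have hm : orderOf (f (r i)) ∣ m := by
    rw [orderOf_dvd_iff_pow_eq_one, ← map_pow, r_pow, ZMod.natCast_self, mul_zero, r_zero,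
      map_one]
  rw [← orderOf_eq_one_iff]
  exact Nat.eq_one_of_dvd_coprimes h hm (orderOf_dvd_natCard _)

def homEquivOfCoprime (h : m.Coprime (Nat.card G)) :
    (DihedralGroup m →* G) ≃ {x : G // x * x = 1} where
  toFun f := ⟨f (sr 0), by rw [← map_mul, sr_mul_self, map_one]⟩
  invFun x := homOfMulSelfEqOne x.1 x.2
  left_inv f := by
    ext (i | i)
    · exact (map_r_eq_one_of_coprime f h i).symm
    · change f (sr 0) = f (sr i)
      rw [← zero_add i, ← sr_mul_r, map_mul, map_r_eq_one_of_coprime f h, mul_one]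
  right_inv _ := rfl

def mulSelfEqOneEquiv : {x : DihedralGroup n // x * x = 1} ≃ {i : ZMod n // i + i = 0} ⊕ ZMod n where
  toFun
    | ⟨r i, h⟩ => .inl ⟨i, by rwa [r_mul_r, one_def, r.injEq] at h⟩
    | ⟨sr i, _⟩ => .inr i
  invFun
    | .inl ⟨i, h⟩ => ⟨r i, by rw [r_mul_r, h, one_def]⟩
    | .inr i => ⟨sr i, sr_mul_self i⟩
  left_inv := by rintro ⟨i | i, h⟩ <;> rfl
  right_inv := by rintro (⟨i, h⟩ | i) <;> rfl

theorem card_mul_self_eq_one [NeZero n] :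
    Nat.card {x : DihedralGroup n // x * x = 1} = Nat.card {i : ZMod n // i + i = 0} + n := by
  rw [Nat.card_congr mulSelfEqOneEquiv, Nat.card_sum, Nat.card_zmod]

end DihedralGroup

open DihedralGroup

theorem numHom_odd_even_coprime_general (m n : ℕ) (hn : 0 < n) (hmo : Odd m) (hne : Even n)
    (hcop : Nat.gcd m n = 1) :
    Nat.card (DihedralGroup m →* DihedralGroup n) = n + 2 := by
  obtain ⟨k, rfl⟩ := hne
  have : NeZero k := ⟨by omega⟩
  have hcard : m.Coprime (Nat.card (DihedralGroup (k + k))) := by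
    rw [nat_card]
    exact Nat.Coprime.mul_right hmo.coprime_two_right hcop
  rw [Nat.card_congr (homEquivOfCoprime hcard), card_mul_self_eq_one,
    ZMod.card_add_self_eq_zero_of_double, add_comm]

theorem numHom_odd_even_coprime (m n : ℕ) (hm : 0 < m) (hn : 0 < n) (hmo : Odd m) (hne : Even n)
    (hcop : Nat.gcd m n = 1) :
    Nat.card (DihedralGroup m →* DihedralGroup n) = n + 2 :=
  numHom_odd_even_coprime_general m n hn hmo hne hcop
end
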